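/- arXiv:cond-mat/0209157 — 2 statements merged into one kernel-verified Lean document; each statement's English description precedes it below -/
import Mathlib

section
/- Let G be a group of permutations of {1,…,N} acting transitively, and let J be a real symmetric N×N matrix invariant under G, i.e. J_{g(μ) g(ν)} = J_{μν} for all g ∈ G and all μ, ν. Let s be a state together with a map R : G → O(3) such that s_{g(μ)} = R_g s_μ for all g ∈ G and all μ, and assume s is isotropic: for every μ there exists g ∈ G with g(μ) = μ such that R_g is a rotation (det R_g = 1) with R_g² ≠ 1. Then s is stationary, and in fact weakly symmetric: there exists a constant c ∈ ℝ with ∑_ν J_{μν} s_ν = c s_μ for all μ. -/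
/-!
The local field `h_μ = ∑_ν J_{μν} s_ν` transforms like the state: `h_{g μ} = R_g h_μ`, by the
`G`-invariance of `J`. At a site `μ₀` fixed by an isotropy element `g₀`, both `s_{μ₀}` and
`h_{μ₀}` are fixed by the rotation `R_{g₀} ≠ 1`, whose fixed space is its rotation axis, so
`h_{μ₀} = c s_{μ₀}`. Transporting this along `G`, which is transitive, gives `h_μ = c s_μ` at
every site with the same `c`.
-/

open Matrix

namespace Matrix

section CommRing

variable {R : Type*} [CommRing R]

lemma mulVec_cross_mulVec (A : Matrix (Fin 3) (Fin 3) R) (a b : Fin 3 → R) :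
    (A *ᵥ a) ⨯₃ (A *ᵥ b) = A.adjugateᵀ *ᵥ (a ⨯₃ b) := by
  ext i
  fin_cases i <;>
    simp [cross_apply, mulVec, dotProduct, Fin.sum_univ_three, adjugate_fin_three] <;> ring

lemma adjugate_eq_transpose_of_mul_transpose_eq_one {A : Matrix (Fin 3) (Fin 3) R}
    (hA : A * Aᵀ = 1) (hdet : A.det = 1) : A.adjugate = Aᵀ := by
  rw [← inv_eq_right_inv hA, inv_def, hdet, Ring.inverse_one, one_smul]

lemma mulVec_cross_of_mul_transpose_eq_one {A : Matrix (Fin 3) (Fin 3) R}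
    (hA : A * Aᵀ = 1) (hdet : A.det = 1) (a b : Fin 3 → R) :
    A *ᵥ (a ⨯₃ b) = (A *ᵥ a) ⨯₃ (A *ᵥ b) := by
  rw [mulVec_cross_mulVec, adjugate_eq_transpose_of_mul_transpose_eq_one hA hdet,
    transpose_transpose]

end CommRing

lemma mul_transpose_eq_self_of_mulVec_eq_self {m n R : Type*} [Fintype n] [CommSemiring R]
    {A : Matrix n n R} {M : Matrix m n R} (h : ∀ i, A *ᵥ M i = M i) : A * Mᵀ = Mᵀ := by
  ext i j
  simpa [mul_apply, mulVec, dotProduct] using congrFun (h j) i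

section OrderedField

variable {K : Type*} [Field K] [LinearOrder K] [IsStrictOrderedRing K]

lemma eq_one_of_mulVec_eq_self_of_linearIndependent {A : Matrix (Fin 3) (Fin 3) K}
    (hA : A * Aᵀ = 1) (hdet : A.det = 1) {v w : Fin 3 → K}
    (hvw : LinearIndependent K ![v, w]) (hv : A *ᵥ v = v) (hw : A *ᵥ w = w) : A = 1 := by
  set u := v ⨯₃ w
  have hu : A *ᵥ u = u := by rw [mulVec_cross_of_mul_transpose_eq_one hA hdet, hv, hw]
  -- `u, v, w` is a basis: `det ![u, v, w] = u ⬝ᵥ v ⨯₃ w = u ⬝ᵥ u ≠ 0`.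
  set M : Matrix (Fin 3) (Fin 3) K := ![u, v, w]
  have hM : IsUnit Mᵀ := by
    rw [isUnit_iff_isUnit_det, det_transpose, isUnit_iff_ne_zero, ← triple_product_eq_det]
    exact fun h => crossProduct_ne_zero_iff_linearIndependent.mpr hvw
      (dotProduct_self_eq_zero.mp h)
  have hAM : A * Mᵀ = 1 * Mᵀ := by
    rw [one_mul]
    refine mul_transpose_eq_self_of_mulVec_eq_self fun i => ?_
    fin_cases i <;> assumption
  exact hM.mul_right_cancel hAM

lemma exists_eq_smul_of_mulVec_eq_self {A : Matrix (Fin 3) (Fin 3) K}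
    (hA : A * Aᵀ = 1) (hdet : A.det = 1) (hA1 : A ≠ 1) {v w : Fin 3 → K} (hv0 : v ≠ 0)
    (hv : A *ᵥ v = v) (hw : A *ᵥ w = w) : ∃ t : K, w = t • v := by
  by_contra! h
  refine hA1 (eq_one_of_mulVec_eq_self_of_linearIndependent hA hdet ?_ hv hw)
  exact (LinearIndependent.pair_iff' hv0).mpr fun t ht => h t ht.symm

end OrderedField

end Matrix

section LocalField

variable {ι M : Type*} [Fintype ι] [AddCommMonoid M] [Module ℝ M]

def localField (J : Matrix ι ι ℝ) (s : ι → M) (μ : ι) : M := ∑ ν, J μ ν • s ν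

lemma localField_perm {J : Matrix ι ι ℝ} {s : ι → M} {σ : Equiv.Perm ι} {f : M →ₗ[ℝ] M}
    (hJ : ∀ μ ν, J (σ μ) (σ ν) = J μ ν) (hs : ∀ μ, s (σ μ) = f (s μ)) (μ : ι) :
    localField J s (σ μ) = f (localField J s μ) := by
  simp only [localField, map_sum, map_smul, ← hJ μ, ← hs]
  exact (Equiv.sum_comp σ _).symm

end LocalField

theorem isotropic_implies_weakly_symmetric_general {N : ℕ}
    (G : Subgroup (Equiv.Perm (Fin N)))
    (htrans : ∀ μ ν : Fin N, ∃ g ∈ G, g μ = ν)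
    (J : Matrix (Fin N) (Fin N) ℝ)
    (hinv : ∀ g ∈ G, ∀ μ ν : Fin N, J (g μ) (g ν) = J μ ν)
    (s : Fin N → EuclideanSpace ℝ (Fin 3)) (hstate : ∀ μ, ‖s μ‖ = 1)
    (R : G → Matrix (Fin 3) (Fin 3) ℝ)
    (hR : ∀ g : G, R g * (R g)ᵀ = 1)
    (hcov : ∀ g : G, ∀ μ, s ((g : Equiv.Perm (Fin N)) μ) = (R g).mulVec (s μ))
    -- s is isotropic:
    (hiso : ∀ μ : Fin N, ∃ g : G, (g : Equiv.Perm (Fin N)) μ = μ ∧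
      (R g).det = 1 ∧ R g * R g ≠ 1) :
    -- then s is stationary, and in fact weakly symmetric:
    ∃ c : ℝ, ∀ μ, ∑ ν, J μ ν • s ν = c • s μ := by
  rcases isEmpty_or_nonempty (Fin N) with hN | ⟨⟨μ₀⟩⟩
  · exact ⟨0, isEmptyElim⟩
  set v : Fin N → Fin 3 → ℝ := fun μ => s μ
  have hfield (g : G) (μ : Fin N) :
      localField J v ((g : Equiv.Perm (Fin N)) μ) = R g *ᵥ localField J v μ :=
    localField_perm (f := (R g).mulVecLin) (hinv g g.2) (hcov g) μ
  obtain ⟨g₀, hfix, hdet, hsq⟩ := hiso μ₀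
  have hv0 : v μ₀ ≠ 0 := by
    simpa [v] using norm_ne_zero_iff.mp ((hstate μ₀).trans_ne one_ne_zero)
  obtain ⟨c, hc⟩ := exists_eq_smul_of_mulVec_eq_self (hR g₀) hdet (fun h => hsq (by simp [h]))
    hv0 (by rw [← hcov, hfix]) (by rw [← hfield, hfix])
  refine ⟨c, fun μ => WithLp.ofLp_injective 2 ?_⟩
  obtain ⟨g, hg, rfl⟩ := htrans μ₀ μ
  have hμ := hfield ⟨g, hg⟩ μ₀
  rw [hc, mulVec_smul, ← hcov] at hμ
  simpa [localField] using hμ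

theorem isotropic_implies_weakly_symmetric {N : ℕ}
    (G : Subgroup (Equiv.Perm (Fin N)))
    (htrans : ∀ μ ν : Fin N, ∃ g ∈ G, g μ = ν)
    (J : Matrix (Fin N) (Fin N) ℝ) (hJ : J.IsSymm)
    (hinv : ∀ g ∈ G, ∀ μ ν : Fin N, J (g μ) (g ν) = J μ ν)
    (s : Fin N → EuclideanSpace ℝ (Fin 3)) (hstate : ∀ μ, ‖s μ‖ = 1)
    (R : G → Matrix (Fin 3) (Fin 3) ℝ)
    (hR : ∀ g : G, R g * (R g)ᵀ = 1)
    (hcov : ∀ g : G, ∀ μ, s ((g : Equiv.Perm (Fin N)) μ) = (R g).mulVec (s μ))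
    -- s is isotropic:
    (hiso : ∀ μ : Fin N, ∃ g : G, (g : Equiv.Perm (Fin N)) μ = μ ∧
      (R g).det = 1 ∧ R g * R g ≠ 1) :
    -- then s is stationary, and in fact weakly symmetric:
    ∃ c : ℝ, ∀ μ, ∑ ν, J μ ν • s ν = c • s μ :=
  isotropic_implies_weakly_symmetric_general G htrans J hinv s hstate R hR hcov hiso
end

section
/- Consider the octahedron spin system of N = 6 spins with coupling constant J > 0: label the spins 1,…,6 so that the antipodal (non-adjacent) pairs are {1,6}, {2,5}, {3,4}, and every other pair of distinct spins is adjacent; the energy is H₀(s) = J ∑ ⟨s_μ, s_ν⟩, summed over all ordered pairs (μ,ν) of distinct adjacent spins. Then for every S with 0 ≤ S ≤ 6, the maximal energy among states with total spin length S equals (2/3)·J·S²: every state s with ‖∑_μ s_μ‖ = S satisfies H₀(s) ≤ (2/3)·J·S², and there is such a state attaining this value. -/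
/-!
Octahedral adjacency means "distinct and not antipodal". With the antipodal pair sums
`a μ = s μ + s μ.rev`, the energy is `J * (‖∑ s‖² - ½ ∑ ‖a μ‖²)`, and since `∑ a μ = 2 ∑ s`,
Cauchy–Schwarz gives `∑ ‖a μ‖² ≥ 4/6 ‖∑ s‖²`, hence `H₀ ≤ 2/3 J S²`. Equality holds as soon as
all `a μ` coincide, e.g. for the spins `(t, ±√(1 - t²), 0)` with `t = S / 6` and opposite signs
on antipodes.
-/

open scoped RealInnerProductSpace

/-- Two vertices of the octahedron (labelled by `Fin 6`) are adjacent iff they are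
distinct and not antipodal, the antipodal pairs being `{0,5}, {1,4}, {2,3}`
(i.e. `{1,6}, {2,5}, {3,4}` in 1-based labelling). -/
def octaAdj (μ ν : Fin 6) : Prop := μ ≠ ν ∧ (μ : ℕ) + (ν : ℕ) ≠ 5

instance : DecidableRel octaAdj := fun _ _ => instDecidableAnd

/-- The energy of the octahedron spin system with coupling `J`:
`J` times the sum of `⟨s_μ, s_ν⟩` over all ordered adjacent pairs. -/
noncomputable def octaEnergy (J : ℝ) (s : Fin 6 → EuclideanSpace ℝ (Fin 3)) : ℝ :=
  J * ∑ μ, ∑ ν, if octaAdj μ ν then ⟪s μ, s ν⟫ else 0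

open Finset Function

section Antipodal

variable {ι E : Type*} [Fintype ι] [NormedAddCommGroup E] [InnerProductSpace ℝ E] {r : ι → ι}

theorem sum_add_comp_involutive (hr : Involutive r) (s : ι → E) :
    ∑ μ, (s μ + s (r μ)) = (2 : ℝ) • ∑ μ, s μ := by
  rw [sum_add_distrib, hr.bijective.sum_comp s, two_smul]

theorem sum_inner_add_comp_involutive (hr : Involutive r) (s : ι → E) :
    ∑ μ, ⟪s μ, s μ + s (r μ)⟫ = (∑ μ, ‖s μ + s (r μ)‖ ^ 2) / 2 := by
  have hswap : ∑ μ, ⟪s (r μ), s μ + s (r μ)⟫ = ∑ μ, ⟪s μ, s μ + s (r μ)⟫ :=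
    calc ∑ μ, ⟪s (r μ), s μ + s (r μ)⟫ = ∑ μ, ⟪s (r μ), s (r μ) + s (r (r μ))⟫ := by
          simp only [hr _, add_comm]
      _ = _ := hr.bijective.sum_comp fun μ => ⟪s μ, s μ + s (r μ)⟫
  simp_rw [← real_inner_self_eq_norm_sq, inner_add_left, sum_add_distrib, hswap]
  ring

theorem sum_inner_off_antipodal_eq [DecidableEq ι] (hr : Involutive r) (hfix : ∀ μ, r μ ≠ μ)
    (s : ι → E) :
    ∑ μ, ∑ ν, (if μ ≠ ν ∧ ν ≠ r μ then ⟪s μ, s ν⟫ else 0) =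
      ‖∑ μ, s μ‖ ^ 2 - (∑ μ, ‖s μ + s (r μ)‖ ^ 2) / 2 := by
  have hrow : ∀ μ, ∑ ν, (if μ ≠ ν ∧ ν ≠ r μ then ⟪s μ, s ν⟫ else 0) =
      ⟪s μ, ∑ ν, s ν⟫ - ⟪s μ, s μ + s (r μ)⟫ := by
    intro μ
    have hterm : ∀ ν, (if μ ≠ ν ∧ ν ≠ r μ then ⟪s μ, s ν⟫ else 0) = ⟪s μ, s ν⟫ -
        (if μ = ν then ⟪s μ, s ν⟫ else 0) - (if r μ = ν then ⟪s μ, s ν⟫ else 0) := by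
      intro ν
      by_cases h₁ : μ = ν
      · subst h₁; simp [hfix μ]
      · rcases eq_or_ne (r μ) ν with h₂ | h₂
        · subst h₂; simp [h₁]
        · simp [h₁, h₂, h₂.symm]
    simp only [hterm, sum_sub_distrib, sum_ite_eq, mem_univ, if_true, inner_sum, inner_add_right]
    ring
  rw [sum_congr rfl fun μ _ => hrow μ, sum_sub_distrib, ← sum_inner,
    real_inner_self_eq_norm_sq, sum_inner_add_comp_involutive hr]

theorem four_mul_norm_sum_sq_le (hr : Involutive r) (s : ι → E) :
    4 * ‖∑ μ, s μ‖ ^ 2 ≤ Fintype.card ι * ∑ μ, ‖s μ + s (r μ)‖ ^ 2 := by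
  calc 4 * ‖∑ μ, s μ‖ ^ 2 = ‖∑ μ, (s μ + s (r μ))‖ ^ 2 := by
        rw [sum_add_comp_involutive hr, norm_smul, mul_pow]; norm_num
    _ ≤ (∑ μ, ‖s μ + s (r μ)‖) ^ 2 := by gcongr; exact norm_sum_le _ _
    _ ≤ Fintype.card ι * ∑ μ, ‖s μ + s (r μ)‖ ^ 2 := sq_sum_le_card_mul_sum_sq

theorem card_mul_sum_inner_off_antipodal_le [DecidableEq ι] (hr : Involutive r)
    (hfix : ∀ μ, r μ ≠ μ) (s : ι → E) :
    Fintype.card ι * ∑ μ, ∑ ν, (if μ ≠ ν ∧ ν ≠ r μ then ⟪s μ, s ν⟫ else 0) ≤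
      (Fintype.card ι - 2) * ‖∑ μ, s μ‖ ^ 2 := by
  rw [sum_inner_off_antipodal_eq hr hfix]
  linarith [four_mul_norm_sum_sq_le hr s]

end Antipodal

theorem octaAdj_iff {μ ν : Fin 6} : octaAdj μ ν ↔ μ ≠ ν ∧ ν ≠ μ.rev := by
  simp only [octaAdj, ne_eq, Fin.ext_iff, Fin.val_rev]
  omega

theorem Fin.rev_ne_self {n : ℕ} (hn : Even n) (μ : Fin n) : μ.rev ≠ μ := by
  intro h
  have hval := congrArg Fin.val h
  rw [Fin.val_rev] at hval
  obtain ⟨k, rfl⟩ := hn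
  omega

theorem octaEnergy_eq (J : ℝ) (s : Fin 6 → EuclideanSpace ℝ (Fin 3)) :
    octaEnergy J s = J * (‖∑ μ, s μ‖ ^ 2 - (∑ μ, ‖s μ + s μ.rev‖ ^ 2) / 2) := by
  simp only [octaEnergy, octaAdj_iff]
  rw [sum_inner_off_antipodal_eq Fin.rev_involutive (Fin.rev_ne_self (by decide))]

theorem octaEnergy_le {J : ℝ} (hJ : 0 ≤ J) (s : Fin 6 → EuclideanSpace ℝ (Fin 3)) :
    octaEnergy J s ≤ 2 / 3 * J * ‖∑ μ, s μ‖ ^ 2 := by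
  have h := card_mul_sum_inner_off_antipodal_le Fin.rev_involutive (Fin.rev_ne_self (by decide)) s
  simp only [Fintype.card_fin, Nat.cast_ofNat, ← octaAdj_iff] at h
  rw [octaEnergy]
  nlinarith [mul_le_mul_of_nonneg_left h hJ]

noncomputable def tiltedState (t : ℝ) (μ : Fin 6) : EuclideanSpace ℝ (Fin 3) :=
  t • EuclideanSpace.single 0 1 +
    (if (μ : ℕ) < 3 then √(1 - t ^ 2) else -√(1 - t ^ 2)) • EuclideanSpace.single 1 1

theorem norm_tiltedState {t : ℝ} (ht : |t| ≤ 1) (μ : Fin 6) : ‖tiltedState t μ‖ = 1 := by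
  have hu : √(1 - t ^ 2) ^ 2 = 1 - t ^ 2 := Real.sq_sqrt (by nlinarith [abs_le.mp ht, sq_abs t])
  rw [← pow_eq_one_iff_of_nonneg (norm_nonneg _) two_ne_zero, tiltedState,
    norm_add_sq_real]
  split_ifs <;> simp [norm_smul, inner_smul_left, inner_smul_right, hu,
    EuclideanSpace.inner_single_left]

theorem tiltedState_add_rev (t : ℝ) (μ : Fin 6) :
    tiltedState t μ + tiltedState t μ.rev = (2 * t) • EuclideanSpace.single 0 1 := by
  have hsign : (μ : ℕ) < 3 ↔ ¬ ((μ.rev : ℕ) < 3) := by rw [Fin.val_rev]; omega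
  simp only [tiltedState, hsign]
  split_ifs <;> module

theorem sum_tiltedState (t : ℝ) :
    ∑ μ, tiltedState t μ = (6 * t) • EuclideanSpace.single (0 : Fin 3) (1 : ℝ) := by
  have h := sum_add_comp_involutive Fin.rev_involutive (tiltedState t)
  simp only [tiltedState_add_rev, sum_const, card_univ, Fintype.card_fin] at h
  apply smul_right_injective _ (two_ne_zero : (2 : ℝ) ≠ 0)
  simp only [← h]
  module

theorem octaEnergy_tiltedState (J t : ℝ) : octaEnergy J (tiltedState t) = 24 * J * t ^ 2 := by
  simp only [octaEnergy_eq, sum_tiltedState, tiltedState_add_rev, sum_const, card_univ,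
    Fintype.card_fin, norm_smul, PiLp.norm_single, norm_one, mul_one, Real.norm_eq_abs, mul_pow,
    sq_abs, nsmul_eq_mul]
  ring

theorem octahedron_relative_anti_ground_state_energy (J : ℝ) (hJ : 0 < J)
    (S : ℝ) (hS0 : 0 ≤ S) (hS6 : S ≤ 6) :
    (∀ s : Fin 6 → EuclideanSpace ℝ (Fin 3), (∀ μ, ‖s μ‖ = 1) →
      ‖∑ μ, s μ‖ = S → octaEnergy J s ≤ 2 / 3 * J * S ^ 2) ∧
    ∃ s : Fin 6 → EuclideanSpace ℝ (Fin 3), (∀ μ, ‖s μ‖ = 1) ∧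
      ‖∑ μ, s μ‖ = S ∧ octaEnergy J s = 2 / 3 * J * S ^ 2 := by
  refine ⟨fun s _ hsum => hsum ▸ octaEnergy_le hJ.le s, ?_⟩
  have ht : |S / 6| ≤ 1 := abs_le.mpr ⟨by linarith, by linarith⟩
  refine ⟨tiltedState (S / 6), norm_tiltedState ht, ?_, ?_⟩
  · rw [sum_tiltedState, norm_smul, PiLp.norm_single, norm_one, mul_one, Real.norm_eq_abs,
      abs_of_nonneg (by linarith)]
    ring
  · rw [octaEnergy_tiltedState]
    ring
end
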